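/- arXiv:2002.07540 — 3 statements merged into one kernel-verified Lean document; each statement's English description precedes it below -/
import Mathlib

section
/- The function f_E defined by f_E(j,k,n) = ½·∑_{s=1}^{n−1} f₀(j−s, k, n−s) solves the discrete wave equation in the cone |j|+|k| < n with boundary conditions (0; 1, 0, 0, 0). -/
/-- `f` solves the discrete wave equation in the cone `|j|+|k| < n`
with boundary conditions `(b₀; b_E, b_N, b_W, b_S)` (real-valued version). -/
def IsConeSolution (f : ℤ → ℤ → ℕ → ℝ) (b0 bE bN bW bS : ℝ) : Prop :=
  (∀ (j k : ℤ) (n : ℕ), ¬ Odd (j + k + (n : ℤ)) → f j k n = 0) ∧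
  (∀ (j k : ℤ) (n : ℕ), (n : ℤ) ≤ |j| + |k| → f j k n = 0) ∧
  f 0 0 1 = b0 ∧
  (∀ n : ℕ, 1 ≤ n →
    f (-(n : ℤ)) 0 (n + 1) = (1/2) * (f (-(n : ℤ) + 1) 0 n + bW) ∧
    f 0 (n : ℤ) (n + 1) = (1/2) * (f 0 ((n : ℤ) - 1) n + bN) ∧
    f 0 (-(n : ℤ)) (n + 1) = (1/2) * (f 0 (-(n : ℤ) + 1) n + bS) ∧
    f (n : ℤ) 0 (n + 1) = (1/2) * (f ((n : ℤ) - 1) 0 n + bE)) ∧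
  (∀ (j k : ℤ) (n : ℕ), 1 ≤ n → Odd (j + k + (n : ℤ) + 1) → |j| + |k| ≤ (n : ℤ) →
    ({|j|, |k|} : Set ℤ) ≠ {0, (n : ℤ)} →
    f j k (n + 1) + f j k (n - 1) =
      (1/2) * (f (j+1) k n + f (j-1) k n + f j (k+1) n + f j (k-1) n))

private lemma f0_parity' (f0 : ℤ → ℤ → ℕ → ℝ)
    (h0 : ∀ j k : ℤ, f0 j k 0 = 0)
    (h1' : ∀ j k : ℤ, ¬(j = 0 ∧ k = 0) → f0 j k 1 = 0)
    (hrec : ∀ (j k : ℤ) (n : ℕ), f0 j k (n + 2) + f0 j k n =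
      (1/2) * (f0 (j+1) k (n+1) + f0 (j-1) k (n+1) + f0 j (k+1) (n+1) + f0 j (k-1) (n+1))) :
    ∀ (n : ℕ) (j k : ℤ), ¬ Odd (j + k + (n : ℤ)) → f0 j k n = 0 := by
  intro n
  induction n using Nat.strong_induction_on with
  | _ n ih =>
  match n with
  | 0 => exact fun j k _ => h0 j k
  | 1 =>
    intro j k h
    apply h1'
    rintro ⟨rfl, rfl⟩
    simp [Int.odd_iff] at h
  | (n+2) =>
    intro j k h
    push_cast at h
    rw [Int.odd_iff] at h
    have e0 : f0 j k n = 0 := ih n (by omega) j k (by rw [Int.odd_iff]; omega)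
    have e1 : f0 (j+1) k (n+1) = 0 := ih (n+1) (by omega) _ _ (by rw [Int.odd_iff]; push_cast; omega)
    have e2 : f0 (j-1) k (n+1) = 0 := ih (n+1) (by omega) _ _ (by rw [Int.odd_iff]; push_cast; omega)
    have e3 : f0 j (k+1) (n+1) = 0 := ih (n+1) (by omega) _ _ (by rw [Int.odd_iff]; push_cast; omega)
    have e4 : f0 j (k-1) (n+1) = 0 := ih (n+1) (by omega) _ _ (by rw [Int.odd_iff]; push_cast; omega)
    have key := hrec j k n
    rw [e0, e1, e2, e3, e4] at key
    linarith

private lemma f0_supp' (f0 : ℤ → ℤ → ℕ → ℝ)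
    (h0 : ∀ j k : ℤ, f0 j k 0 = 0)
    (h1' : ∀ j k : ℤ, ¬(j = 0 ∧ k = 0) → f0 j k 1 = 0)
    (hrec : ∀ (j k : ℤ) (n : ℕ), f0 j k (n + 2) + f0 j k n =
      (1/2) * (f0 (j+1) k (n+1) + f0 (j-1) k (n+1) + f0 j (k+1) (n+1) + f0 j (k-1) (n+1))) :
    ∀ (n : ℕ) (j k : ℤ), (n : ℤ) ≤ |j| + |k| → f0 j k n = 0 := by
  intro n
  induction n using Nat.strong_induction_on with
  | _ n ih =>
  match n with
  | 0 => exact fun j k _ => h0 j k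
  | 1 =>
    intro j k h
    apply h1'
    rintro ⟨rfl, rfl⟩
    simp at h
  | (n+2) =>
    intro j k h
    push_cast at h
    have t1 : |j| ≤ |j + 1| + 1 := by
      have h' := abs_sub_abs_le_abs_sub j (j+1)
      have e : j - (j+1) = -1 := by ring
      rw [e] at h'; simp at h'; linarith
    have t2 : |j| ≤ |j - 1| + 1 := by
      have h' := abs_sub_abs_le_abs_sub j (j-1)
      have e : j - (j-1) = 1 := by ring
      rw [e] at h'; simp at h'; linarith
    have t3 : |k| ≤ |k + 1| + 1 := by
      have h' := abs_sub_abs_le_abs_sub k (k+1)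
      have e : k - (k+1) = -1 := by ring
      rw [e] at h'; simp at h'; linarith
    have t4 : |k| ≤ |k - 1| + 1 := by
      have h' := abs_sub_abs_le_abs_sub k (k-1)
      have e : k - (k-1) = 1 := by ring
      rw [e] at h'; simp at h'; linarith
    have e0 : f0 j k n = 0 := ih n (by omega) j k (by push_cast; linarith)
    have e1 : f0 (j+1) k (n+1) = 0 := ih (n+1) (by omega) _ _ (by push_cast; linarith)
    have e2 : f0 (j-1) k (n+1) = 0 := ih (n+1) (by omega) _ _ (by push_cast; linarith)
    have e3 : f0 j (k+1) (n+1) = 0 := ih (n+1) (by omega) _ _ (by push_cast; linarith)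
    have e4 : f0 j (k-1) (n+1) = 0 := ih (n+1) (by omega) _ _ (by push_cast; linarith)
    have key := hrec j k n
    rw [e0, e1, e2, e3, e4] at key
    linarith

private lemma f0_term_supp (f0 : ℤ → ℤ → ℕ → ℝ)
    (h0 : ∀ j k : ℤ, f0 j k 0 = 0)
    (hsupp : ∀ (n : ℕ) (j k : ℤ), (n : ℤ) ≤ |j| + |k| → f0 j k n = 0)
    (j k : ℤ) (n s : ℕ) (h : (n : ℤ) ≤ |j| + |k|) : f0 (j - (s:ℤ)) k (n - s) = 0 := by
  rcases le_or_gt s n with hs | hs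
  · apply hsupp
    have habs : |j| - |j - s| ≤ |(s:ℤ)| := by
      have h' := abs_sub_abs_le_abs_sub j (j - s)
      have e : j - (j - s) = (s:ℤ) := by ring
      rwa [e] at h'
    have hs' : |(s:ℤ)| = s := abs_of_nonneg (by positivity)
    rw [Nat.cast_sub hs]
    linarith
  · rw [Nat.sub_eq_zero_of_le hs.le]
    exact h0 _ _

private lemma f0_term_parity (f0 : ℤ → ℤ → ℕ → ℝ)
    (h0 : ∀ j k : ℤ, f0 j k 0 = 0)
    (hpar : ∀ (n : ℕ) (j k : ℤ), ¬ Odd (j + k + (n : ℤ)) → f0 j k n = 0)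
    (j k : ℤ) (n s : ℕ) (h : ¬ Odd (j + k + (n : ℤ))) : f0 (j - (s:ℤ)) k (n - s) = 0 := by
  rcases le_or_gt s n with hs | hs
  · apply hpar
    rw [Int.odd_iff] at h ⊢
    rw [Nat.cast_sub hs]
    omega
  · rw [Nat.sub_eq_zero_of_le hs.le]
    exact h0 _ _

private lemma f0_key (f0 : ℤ → ℤ → ℕ → ℝ)
    (h0 : ∀ j k : ℤ, f0 j k 0 = 0)
    (hrec : ∀ (j k : ℤ) (n : ℕ), f0 j k (n + 2) + f0 j k n =
      (1/2) * (f0 (j+1) k (n+1) + f0 (j-1) k (n+1) + f0 j (k+1) (n+1) + f0 j (k-1) (n+1)))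
    (j k : ℤ) (m : ℕ) :
    (∑ s ∈ Finset.Icc 1 (m+1), f0 (j - (s:ℤ)) k (m + 1 + 1 - s))
      + (∑ s ∈ Finset.Icc 1 (m - 1), f0 (j - (s:ℤ)) k (m - s))
    = (1/2) * ((∑ s ∈ Finset.Icc 1 m, f0 (j + 1 - (s:ℤ)) k (m + 1 - s))
        + (∑ s ∈ Finset.Icc 1 m, f0 (j - 1 - (s:ℤ)) k (m + 1 - s))
        + (∑ s ∈ Finset.Icc 1 m, f0 (j - (s:ℤ)) (k+1) (m + 1 - s))
        + (∑ s ∈ Finset.Icc 1 m, f0 (j - (s:ℤ)) (k-1) (m + 1 - s)))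
      + f0 (j - ((m:ℤ)+1)) k 1 := by
  have step1 : (∑ s ∈ Finset.Icc 1 (m+1), f0 (j - (s:ℤ)) k (m + 1 + 1 - s))
      = (∑ s ∈ Finset.Icc 1 m, f0 (j - (s:ℤ)) k (m + 1 + 1 - s)) + f0 (j - ((m:ℤ)+1)) k 1 := by
    rw [Finset.sum_Icc_succ_top (by omega : (1:ℕ) ≤ m + 1)]
    have e1 : ((m+1:ℕ):ℤ) = (m:ℤ)+1 := by push_cast; ring
    have e2 : m + 1 + 1 - (m+1) = 1 := by omega
    rw [e1, e2]
  have step2 : (∑ s ∈ Finset.Icc 1 (m-1), f0 (j - (s:ℤ)) k (m - s))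
      = (∑ s ∈ Finset.Icc 1 m, f0 (j - (s:ℤ)) k (m - s)) := by
    match m with
    | 0 => rfl
    | (l+1) =>
      rw [Finset.sum_Icc_succ_top (by omega : (1:ℕ) ≤ l + 1)]
      simp [h0]
  have step4 : (∑ s ∈ Finset.Icc 1 m, (f0 (j - (s:ℤ)) k (m + 1 + 1 - s) + f0 (j - (s:ℤ)) k (m - s)))
      = ∑ s ∈ Finset.Icc 1 m, (1/2) * (f0 (j + 1 - (s:ℤ)) k (m + 1 - s) + f0 (j - 1 - (s:ℤ)) k (m + 1 - s)
          + f0 (j - (s:ℤ)) (k+1) (m + 1 - s) + f0 (j - (s:ℤ)) (k-1) (m + 1 - s)) := by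
    apply Finset.sum_congr rfl
    intro s hs
    rw [Finset.mem_Icc] at hs
    have e2 : m + 1 + 1 - s = (m - s) + 2 := by omega
    have e1 : m + 1 - s = (m - s) + 1 := by omega
    have a1 : j + 1 - (s:ℤ) = (j - s) + 1 := by ring
    have a2 : j - 1 - (s:ℤ) = (j - s) - 1 := by ring
    rw [e2, e1, a1, a2]
    exact hrec (j - s) k (m - s)
  rw [step1, step2]
  have hda := Finset.sum_add_distrib (s := Finset.Icc 1 m)
    (f := fun s : ℕ => f0 (j - (s:ℤ)) k (m + 1 + 1 - s)) (g := fun s : ℕ => f0 (j - (s:ℤ)) k (m - s))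
  rw [step4] at hda
  rw [← Finset.mul_sum] at hda
  simp only [Finset.sum_add_distrib] at hda
  linarith

/-- `f_E(j,k,n) = ½·∑_{s=1}^{n−1} f₀(j−s,k,n−s)` solves the discrete wave equation
in the cone `|j|+|k| < n` with boundary conditions `(0; 1, 0, 0, 0)`, where `f₀` is
the fundamental solution of the discrete wave equation on the half-space `Λ⁺`. -/
theorem fE_is_cone_solution (f0 : ℤ → ℤ → ℕ → ℝ)
    (h0 : ∀ j k : ℤ, f0 j k 0 = 0)
    (h1 : f0 0 0 1 = 1)
    (h1' : ∀ j k : ℤ, ¬(j = 0 ∧ k = 0) → f0 j k 1 = 0)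
    (hrec : ∀ (j k : ℤ) (n : ℕ), f0 j k (n + 2) + f0 j k n =
      (1/2) * (f0 (j+1) k (n+1) + f0 (j-1) k (n+1) + f0 j (k+1) (n+1) + f0 j (k-1) (n+1))) :
    IsConeSolution
      (fun j k n => (1/2) * ∑ s ∈ Finset.Icc 1 (n - 1), f0 (j - (s : ℤ)) k (n - s))
      0 1 0 0 0 := by
  have hpar := f0_parity' f0 h0 h1' hrec
  have hsupp := f0_supp' f0 h0 h1' hrec
  have T := f0_term_supp f0 h0 hsupp
  have Tp := f0_term_parity f0 h0 hpar
  have key := f0_key f0 h0 hrec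
  refine ⟨?_, ?_, ?_, ?_, ?_⟩
  · -- parity
    intro j k n h
    show (1/2) * ∑ s ∈ Finset.Icc 1 (n - 1), f0 (j - (s : ℤ)) k (n - s) = 0
    rw [Finset.sum_eq_zero fun s _ => Tp j k n s h, mul_zero]
  · -- support
    intro j k n h
    show (1/2) * ∑ s ∈ Finset.Icc 1 (n - 1), f0 (j - (s : ℤ)) k (n - s) = 0
    rw [Finset.sum_eq_zero fun s _ => T j k n s h, mul_zero]
  · -- tip
    simp
  · -- edges
    intro n hn
    obtain ⟨m, rfl⟩ : ∃ m, n = m + 1 := ⟨n - 1, by omega⟩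
    have habs1 : |(-((m:ℤ)+1))| = (m:ℤ)+1 := by
      rw [abs_neg]; exact abs_of_nonneg (by positivity)
    have habs1' : |((m:ℤ)+1)| = (m:ℤ)+1 := abs_of_nonneg (by positivity)
    have habs2 : |(-((m:ℤ)+2))| = (m:ℤ)+2 := by
      rw [abs_neg]; exact abs_of_nonneg (by positivity)
    have habs2' : |((m:ℤ)+2)| = (m:ℤ)+2 := abs_of_nonneg (by positivity)
    refine ⟨?_, ?_, ?_, ?_⟩
    · -- West: j = -(m+1), k = 0
      have hE := key (-((m:ℤ)+1)) 0 m
      have v1 : ∑ s ∈ Finset.Icc 1 (m - 1), f0 (-((m:ℤ)+1) - (s:ℤ)) 0 (m - s) = 0 :=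
        Finset.sum_eq_zero fun s _ => T _ 0 m s (by rw [habs1, abs_zero]; linarith)
      have v2 : ∑ s ∈ Finset.Icc 1 m, f0 (-((m:ℤ)+1) - 1 - (s:ℤ)) 0 (m + 1 - s) = 0 :=
        Finset.sum_eq_zero fun s _ => by
          have e : -((m:ℤ)+1) - 1 - (s:ℤ) = (-((m:ℤ)+2)) - s := by ring
          rw [e]
          exact T _ 0 (m+1) s (by rw [habs2, abs_zero]; push_cast; linarith)
      have v3 : ∑ s ∈ Finset.Icc 1 m, f0 (-((m:ℤ)+1) - (s:ℤ)) (0+1) (m + 1 - s) = 0 :=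
        Finset.sum_eq_zero fun s _ => T _ (0+1) (m+1) s (by rw [habs1]; push_cast; norm_num)
      have v4 : ∑ s ∈ Finset.Icc 1 m, f0 (-((m:ℤ)+1) - (s:ℤ)) (0-1) (m + 1 - s) = 0 :=
        Finset.sum_eq_zero fun s _ => T _ (0-1) (m+1) s (by rw [habs1]; push_cast; norm_num)
      have hone : f0 (-((m:ℤ)+1) - ((m:ℤ)+1)) 0 1 = 0 := h1' _ _ (by
        rintro ⟨h', -⟩
        have : (0:ℤ) ≤ (m:ℤ) := Int.natCast_nonneg m
        omega)
      rw [v1, v2, v3, v4, hone] at hE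
      simp only [Nat.add_sub_cancel]
      push_cast
      linarith [hE]
    · -- North: j = 0, k = m+1
      have hE := key 0 ((m:ℤ)+1) m
      have v1 : ∑ s ∈ Finset.Icc 1 (m - 1), f0 (0 - (s:ℤ)) ((m:ℤ)+1) (m - s) = 0 :=
        Finset.sum_eq_zero fun s _ => T 0 _ m s (by rw [habs1', abs_zero]; linarith)
      have v2 : ∑ s ∈ Finset.Icc 1 m, f0 (0 + 1 - (s:ℤ)) ((m:ℤ)+1) (m + 1 - s) = 0 :=
        Finset.sum_eq_zero fun s _ => by
          have e : (0:ℤ) + 1 - (s:ℤ) = (1:ℤ) - s := by ring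
          rw [e]
          exact T 1 _ (m+1) s (by rw [habs1']; push_cast; norm_num)
      have v3 : ∑ s ∈ Finset.Icc 1 m, f0 (0 - 1 - (s:ℤ)) ((m:ℤ)+1) (m + 1 - s) = 0 :=
        Finset.sum_eq_zero fun s _ => by
          have e : (0:ℤ) - 1 - (s:ℤ) = (-1:ℤ) - s := by ring
          rw [e]
          exact T (-1) _ (m+1) s (by rw [habs1']; push_cast; norm_num)
      have v4 : ∑ s ∈ Finset.Icc 1 m, f0 (0 - (s:ℤ)) ((m:ℤ)+1+1) (m + 1 - s) = 0 :=
        Finset.sum_eq_zero fun s _ => T 0 _ (m+1) s (by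
          rw [abs_zero, abs_of_nonneg (by positivity : (0:ℤ) ≤ (m:ℤ)+1+1)]
          push_cast; linarith)
      have hone : f0 (0 - ((m:ℤ)+1)) ((m:ℤ)+1) 1 = 0 := h1' _ _ (by
        rintro ⟨h', -⟩
        have : (0:ℤ) ≤ (m:ℤ) := Int.natCast_nonneg m
        omega)
      rw [v1, v2, v3, v4, hone] at hE
      simp only [Nat.add_sub_cancel]
      push_cast
      linarith [hE]
    · -- South: j = 0, k = -(m+1)
      have hE := key 0 (-((m:ℤ)+1)) m
      have v1 : ∑ s ∈ Finset.Icc 1 (m - 1), f0 (0 - (s:ℤ)) (-((m:ℤ)+1)) (m - s) = 0 :=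
        Finset.sum_eq_zero fun s _ => T 0 _ m s (by rw [habs1, abs_zero]; linarith)
      have v2 : ∑ s ∈ Finset.Icc 1 m, f0 (0 + 1 - (s:ℤ)) (-((m:ℤ)+1)) (m + 1 - s) = 0 :=
        Finset.sum_eq_zero fun s _ => by
          have e : (0:ℤ) + 1 - (s:ℤ) = (1:ℤ) - s := by ring
          rw [e]
          exact T 1 _ (m+1) s (by rw [habs1]; push_cast; norm_num)
      have v3 : ∑ s ∈ Finset.Icc 1 m, f0 (0 - 1 - (s:ℤ)) (-((m:ℤ)+1)) (m + 1 - s) = 0 :=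
        Finset.sum_eq_zero fun s _ => by
          have e : (0:ℤ) - 1 - (s:ℤ) = (-1:ℤ) - s := by ring
          rw [e]
          exact T (-1) _ (m+1) s (by rw [habs1]; push_cast; norm_num)
      have v4 : ∑ s ∈ Finset.Icc 1 m, f0 (0 - (s:ℤ)) (-((m:ℤ)+1)-1) (m + 1 - s) = 0 :=
        Finset.sum_eq_zero fun s _ => by
          have hab : |(-((m:ℤ)+1)-1)| = (m:ℤ)+2 := by
            rw [show -((m:ℤ)+1)-1 = -((m:ℤ)+2) from by ring]; exact habs2
          exact T 0 _ (m+1) s (by rw [abs_zero, hab]; push_cast; linarith)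
      have hone : f0 (0 - ((m:ℤ)+1)) (-((m:ℤ)+1)) 1 = 0 := h1' _ _ (by
        rintro ⟨h', -⟩
        have : (0:ℤ) ≤ (m:ℤ) := Int.natCast_nonneg m
        omega)
      rw [v1, v2, v3, v4, hone] at hE
      simp only [Nat.add_sub_cancel]
      push_cast
      linarith [hE]
    · -- East: j = m+1, k = 0
      have hE := key ((m:ℤ)+1) 0 m
      have v1 : ∑ s ∈ Finset.Icc 1 (m - 1), f0 ((m:ℤ)+1 - (s:ℤ)) 0 (m - s) = 0 :=
        Finset.sum_eq_zero fun s _ => T _ 0 m s (by rw [habs1', abs_zero]; linarith)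
      have v2 : ∑ s ∈ Finset.Icc 1 m, f0 ((m:ℤ)+1+1 - (s:ℤ)) 0 (m + 1 - s) = 0 :=
        Finset.sum_eq_zero fun s _ => by
          have e : (m:ℤ)+1+1 - (s:ℤ) = ((m:ℤ)+2) - s := by ring
          rw [e]
          exact T _ 0 (m+1) s (by rw [habs2', abs_zero]; push_cast; linarith)
      have v3 : ∑ s ∈ Finset.Icc 1 m, f0 ((m:ℤ)+1 - (s:ℤ)) (0+1) (m + 1 - s) = 0 :=
        Finset.sum_eq_zero fun s _ => T _ (0+1) (m+1) s (by rw [habs1']; push_cast; norm_num)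
      have v4 : ∑ s ∈ Finset.Icc 1 m, f0 ((m:ℤ)+1 - (s:ℤ)) (0-1) (m + 1 - s) = 0 :=
        Finset.sum_eq_zero fun s _ => T _ (0-1) (m+1) s (by rw [habs1']; push_cast; norm_num)
      have hone : f0 ((m:ℤ)+1 - ((m:ℤ)+1)) 0 1 = 1 := by
        rw [show (m:ℤ)+1 - ((m:ℤ)+1) = 0 from by ring]; exact h1
      rw [v1, v2, v3, v4, hone] at hE
      simp only [Nat.add_sub_cancel]
      push_cast
      linarith [hE]
  · -- bulk
    intro j k n hn hodd hcone hne
    obtain ⟨m, rfl⟩ : ∃ m, n = m + 1 := ⟨n - 1, by omega⟩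
    have hB := key j k m
    have hone : f0 (j - ((m:ℤ)+1)) k 1 = 0 := h1' _ _ (by
      rintro ⟨hj, hk⟩
      apply hne
      have hj' : j = (m:ℤ)+1 := by omega
      subst hj' hk
      rw [abs_zero, abs_of_nonneg (by positivity : (0:ℤ) ≤ (m:ℤ)+1)]
      push_cast
      exact Set.pair_comm _ _)
    rw [hone] at hB
    simp only [Nat.add_sub_cancel]
    push_cast
    linarith [hB]
end

section
/- Under the change of radial variable r = √2·ρ/(1+ρ²), the operator (1−2r²)∂_{rr} + (1/r − 4r)∂_r + r^{−2}∂_{φφ} applied to a smooth function equals (ρ²/r²)·Δ_{(ρ,φ)} applied to the same function, where Δ_{(ρ,φ)} = ρ^{−1}∂_ρ(ρ∂_ρ) + ρ^{−2}∂_{φφ} is the Laplacian in polar coordinates. Consequently, a self-similar solution of the wave equation, viewed as a function of ζ = ρe^{iφ}, is harmonic in the unit disc. -/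
noncomputable def gg (x : ℝ) : ℝ := Real.sqrt 2 * x / (1 + x ^ 2)
noncomputable def gg1 (x : ℝ) : ℝ :=
  (Real.sqrt 2 * (1 + x ^ 2) - Real.sqrt 2 * x * (2 * x)) / ((1 + x ^ 2) ^ 2)
noncomputable def gg2 (x : ℝ) : ℝ :=
  ((Real.sqrt 2 * (2 * x) - (Real.sqrt 2 * (2 * x) + Real.sqrt 2 * x * 2)) * ((1 + x ^ 2) ^ 2)
    - (Real.sqrt 2 * (1 + x ^ 2) - Real.sqrt 2 * x * (2 * x)) * (2 * (1 + x ^ 2) ^ 1 * (2 * x)))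
    / (((1 + x ^ 2) ^ 2) ^ 2)

lemma halg_aux (s ρ A B C : ℝ) (hs : s ^ 2 = 2) (hsne : s ≠ 0) (hρ : ρ ≠ 0)
    (g g1 g2 : ℝ)
    (hg : g = s * ρ / (1 + ρ ^ 2))
    (hg1 : g1 = (s * (1 + ρ ^ 2) - s * ρ * (2 * ρ)) / ((1 + ρ ^ 2) ^ 2))
    (hg2 : g2 = ((s * (2 * ρ) - (s * (2 * ρ) + s * ρ * 2)) * ((1 + ρ ^ 2) ^ 2)
      - (s * (1 + ρ ^ 2) - s * ρ * (2 * ρ)) * (2 * (1 + ρ ^ 2) ^ 1 * (2 * ρ)))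
      / (((1 + ρ ^ 2) ^ 2) ^ 2)) :
    (1 - 2 * g ^ 2) * B + (1 / g - 4 * g) * A + (g ^ 2)⁻¹ * C
      = (ρ ^ 2 / g ^ 2) * (ρ⁻¹ * (A * g1 + ρ * (B * g1 * g1 + A * g2)) + (ρ ^ 2)⁻¹ * C) := by
  have hd : (1:ℝ) + ρ ^ 2 ≠ 0 := by positivity
  have hgne : g ≠ 0 := by rw [hg]; exact div_ne_zero (mul_ne_zero hsne hρ) hd
  subst hg hg1 hg2
  field_simp
  linear_combination (-2*s^2*ρ^4*B - 4*s*ρ^3*(1+ρ^2)*A) * hs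

lemma hden (x : ℝ) : (1 : ℝ) + x ^ 2 ≠ 0 := by positivity

lemma hasDerivAt_gg (x : ℝ) : HasDerivAt gg (gg1 x) x := by
  have h1 : HasDerivAt (fun y : ℝ => Real.sqrt 2 * y) (Real.sqrt 2) x := by
    simpa using (hasDerivAt_id x).const_mul (Real.sqrt 2)
  have h2 : HasDerivAt (fun y : ℝ => 1 + y ^ 2) (2 * x) x := by
    simpa using (hasDerivAt_pow 2 x).const_add 1
  exact h1.div h2 (hden x)

lemma hasDerivAt_gg1 (x : ℝ) : HasDerivAt gg1 (gg2 x) x := by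
  have h2 : HasDerivAt (fun y : ℝ => 1 + y ^ 2) (2 * x) x := by
    simpa using (hasDerivAt_pow 2 x).const_add 1
  have hn : HasDerivAt (fun y : ℝ => Real.sqrt 2 * (1 + y ^ 2) - Real.sqrt 2 * y * (2 * y))
      (Real.sqrt 2 * (2 * x) - (Real.sqrt 2 * (2 * x) + Real.sqrt 2 * x * 2)) x := by
    have ha : HasDerivAt (fun y : ℝ => Real.sqrt 2 * (1 + y ^ 2)) (Real.sqrt 2 * (2 * x)) x :=
      h2.const_mul _
    have hb : HasDerivAt (fun y : ℝ => Real.sqrt 2 * y) (Real.sqrt 2) x := by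
      simpa using (hasDerivAt_id x).const_mul (Real.sqrt 2)
    have hc : HasDerivAt (fun y : ℝ => 2 * y) 2 x := by
      simpa using (hasDerivAt_id x).const_mul (2:ℝ)
    have := hb.mul hc
    exact ha.sub this
  have hv : HasDerivAt (fun y : ℝ => ((1 + y ^ 2) ^ 2 : ℝ)) (2 * (1 + x ^ 2) ^ 1 * (2 * x)) x :=
    h2.pow 2
  have hvne : ((1 + x ^ 2) ^ 2 : ℝ) ≠ 0 := pow_ne_zero _ (hden x)
  exact hn.div hv hvne

/-- Under the change of radial variable `r = √2·ρ/(1+ρ²)`, the operator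
`(1−2r²)∂_{rr} + (1/r − 4r)∂_r + r^{−2}∂_{φφ}` applied to a smooth function `ψ(r,φ)`
equals `(ρ²/r²)·Δ_{(ρ,φ)}` applied to `ψ̃(ρ,φ) := ψ(r(ρ),φ)`, where
`Δ_{(ρ,φ)} = ρ^{−1}∂_ρ(ρ∂_ρ) + ρ^{−2}∂_{φφ}` is the polar Laplacian.
Consequently, if the first operator annihilates `ψ` (as for self-similar solutions of
the wave equation), then `ψ̃` is harmonic in `ζ = ρe^{iφ}` in the unit disc. -/
theorem radial_change_polar_laplacian (ψ : ℝ → ℝ → ℝ)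
    (hψ : ContDiff ℝ (⊤ : ℕ∞) (fun p : ℝ × ℝ => ψ p.1 p.2))
    (ρ φ : ℝ) (hρ : ρ ∈ Set.Ioo (0:ℝ) 1)
    (r : ℝ) (hr : r = Real.sqrt 2 * ρ / (1 + ρ ^ 2)) :
    ((1 - 2 * r ^ 2) * deriv (deriv (fun r' => ψ r' φ)) r
        + (1 / r - 4 * r) * deriv (fun r' => ψ r' φ) r
        + (r ^ 2)⁻¹ * deriv (deriv (fun φ' => ψ r φ')) φ
      = (ρ ^ 2 / r ^ 2) *
        (ρ⁻¹ * deriv (fun ρ' => ρ' *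
            deriv (fun ρ'' => ψ (Real.sqrt 2 * ρ'' / (1 + ρ'' ^ 2)) φ) ρ') ρ
          + (ρ ^ 2)⁻¹ *
            deriv (deriv (fun φ' => ψ (Real.sqrt 2 * ρ / (1 + ρ ^ 2)) φ')) φ)) ∧
    ((1 - 2 * r ^ 2) * deriv (deriv (fun r' => ψ r' φ)) r
        + (1 / r - 4 * r) * deriv (fun r' => ψ r' φ) r
        + (r ^ 2)⁻¹ * deriv (deriv (fun φ' => ψ r φ')) φ = 0 →
      ρ⁻¹ * deriv (fun ρ' => ρ' *
          deriv (fun ρ'' => ψ (Real.sqrt 2 * ρ'' / (1 + ρ'' ^ 2)) φ) ρ') ρ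
        + (ρ ^ 2)⁻¹ *
          deriv (deriv (fun φ' => ψ (Real.sqrt 2 * ρ / (1 + ρ ^ 2)) φ')) φ = 0) := by
  obtain ⟨hρ0, hρ1⟩ := hρ
  have hρne : ρ ≠ 0 := ne_of_gt hρ0
  -- smoothness of the radial slice
  have hψ' : ContDiff ℝ (⊤:ℕ∞) (fun p : ℝ × ℝ => ψ p.1 p.2) := hψ.of_le (by simp)
  have hfc : ContDiff ℝ (⊤:ℕ∞) (fun r' => ψ r' φ) :=
    hψ'.comp (contDiff_id.prodMk contDiff_const)
  set f : ℝ → ℝ := fun r' => ψ r' φ with hfdef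
  have hf1 : Differentiable ℝ f := hfc.differentiable (by simp)
  have hfd : ContDiff ℝ (⊤:ℕ∞) (deriv f) := (contDiff_infty_iff_deriv.mp hfc).2
  have hf2 : Differentiable ℝ (deriv f) := hfd.differentiable (by simp)
  -- first derivative of ψ̃
  have key1 : ∀ x : ℝ, deriv (fun ρ'' => ψ (Real.sqrt 2 * ρ'' / (1 + ρ'' ^ 2)) φ) x
      = deriv f (gg x) * gg1 x := by
    intro x
    have : HasDerivAt (fun ρ'' => ψ (gg ρ'') φ) (deriv f (gg x) * gg1 x) x :=
      ((hf1 (gg x)).hasDerivAt.comp x (hasDerivAt_gg x))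
    exact this.deriv
  -- derivative of ρ' ↦ ρ' * ψ̃'(ρ')
  have key2 : deriv (fun ρ' => ρ' *
      deriv (fun ρ'' => ψ (Real.sqrt 2 * ρ'' / (1 + ρ'' ^ 2)) φ) ρ') ρ
      = deriv f (gg ρ) * gg1 ρ
        + ρ * (deriv (deriv f) (gg ρ) * gg1 ρ * gg1 ρ + deriv f (gg ρ) * gg2 ρ) := by
    have e1 : (fun ρ' => ρ' *
        deriv (fun ρ'' => ψ (Real.sqrt 2 * ρ'' / (1 + ρ'' ^ 2)) φ) ρ')
        = fun ρ' => ρ' * (deriv f (gg ρ') * gg1 ρ') := funext fun x => by rw [key1 x]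
    rw [e1]
    have h1 : HasDerivAt (fun ρ' : ℝ => deriv f (gg ρ') * gg1 ρ')
        (deriv (deriv f) (gg ρ) * gg1 ρ * gg1 ρ + deriv f (gg ρ) * gg2 ρ) ρ := by
      have ha : HasDerivAt (fun ρ' : ℝ => deriv f (gg ρ'))
          (deriv (deriv f) (gg ρ) * gg1 ρ) ρ :=
        (hf2 (gg ρ)).hasDerivAt.comp ρ (hasDerivAt_gg ρ)
      exact ha.mul (hasDerivAt_gg1 ρ)
    have h2 := (hasDerivAt_id ρ).mul h1
    have h3 : HasDerivAt (fun ρ' : ℝ => ρ' * (deriv f (gg ρ') * gg1 ρ'))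
        (deriv f (gg ρ) * gg1 ρ
          + ρ * (deriv (deriv f) (gg ρ) * gg1 ρ * gg1 ρ + deriv f (gg ρ) * gg2 ρ)) ρ := by
      exact h2.congr_deriv (by simp)
    exact h3.deriv
  have hrg : r = gg ρ := hr
  have hrposden : Real.sqrt 2 * ρ / (1 + ρ ^ 2) = gg ρ := rfl
  rw [hrg, hrposden, key2]
  -- abbreviations
  set A := deriv f (gg ρ) with hA
  set B := deriv (deriv f) (gg ρ) with hB
  set C := deriv (deriv (fun φ' => ψ (gg ρ) φ')) φ with hC
  have halg : (1 - 2 * gg ρ ^ 2) * B + (1 / gg ρ - 4 * gg ρ) * A + (gg ρ ^ 2)⁻¹ * C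
      = (ρ ^ 2 / gg ρ ^ 2) *
        (ρ⁻¹ * (A * gg1 ρ + ρ * (B * gg1 ρ * gg1 ρ + A * gg2 ρ)) + (ρ ^ 2)⁻¹ * C) :=
    halg_aux (Real.sqrt 2) ρ A B C (Real.sq_sqrt (by norm_num)) (by positivity) hρne
      (gg ρ) (gg1 ρ) (gg2 ρ) rfl rfl rfl
  constructor
  · exact halg
  · intro h0
    have hggpos : 0 < gg ρ := by
      have : 0 < Real.sqrt 2 * ρ := by positivity
      exact div_pos this (by positivity)
    have h2 := halg.symm.trans h0
    have hcoef : (ρ ^ 2 / gg ρ ^ 2) ≠ 0 := by positivity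
    exact (mul_eq_zero.mp h2).resolve_left hcoef
end

section
/- For every ζ ∈ ℂ not equal to any of the four points e^{iπ/4}, e^{3iπ/4}, e^{5iπ/4}, e^{7iπ/4}, the following algebraic identity holds: [(1−i)/(ζ−e^{iπ/4}) + (1+i)/(ζ−e^{3iπ/4}) + (−1+i)/(ζ−e^{5iπ/4}) + (−1−i)/(ζ−e^{7iπ/4})] · [(1+i)/(ζ−e^{iπ/4}) + (1−i)/(ζ−e^{3iπ/4}) + (−1−i)/(ζ−e^{5iπ/4}) + (−1+i)/(ζ−e^{7iπ/4})] = 2·[1/(ζ−e^{iπ/4}) − 1/(ζ−e^{3iπ/4}) + 1/(ζ−e^{5iπ/4}) − 1/(ζ−e^{7iπ/4})]². -/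
open Complex Real

/-! With `i² = -1` and the four points written as `±w, ±i w`, put `X = (ζ-w)⁻¹ - (ζ+w)⁻¹`,
`Y = (ζ-iw)⁻¹ - (ζ+iw)⁻¹`. The left side is `((1-i)X + (1+i)Y)((1+i)X + (1-i)Y) = 2(X² + Y²)`,
the cross terms cancelling since `(1-i)² + (1+i)² = 0`. Because `w² + (iw)² = 0`, `X² + Y²` is the
square of the alternating sum `(ζ-w)⁻¹ + (ζ+w)⁻¹ - (ζ-iw)⁻¹ - (ζ+iw)⁻¹`, which is the right side. -/

theorem mul_conj_factor_eq_two_mul_sq_add_sq {R : Type*} [CommRing R] {i : R} (hi : i ^ 2 = -1)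
    (x y : R) :
    ((1 - i) * x + (1 + i) * y) * ((1 + i) * x + (1 - i) * y) = 2 * (x ^ 2 + y ^ 2) := by
  linear_combination -(x - y) ^ 2 * hi

theorem sq_inv_sub_inv_add_sq_inv_sub_inv {K : Type*} [Field K] {ζ u v : K}
    (huv : u ^ 2 + v ^ 2 = 0) (hu : ζ ≠ u) (hu' : ζ ≠ -u) (hv : ζ ≠ v) (hv' : ζ ≠ -v) :
    ((ζ - u)⁻¹ - (ζ + u)⁻¹) ^ 2 + ((ζ - v)⁻¹ - (ζ + v)⁻¹) ^ 2
      = ((ζ - u)⁻¹ + (ζ + u)⁻¹ - (ζ - v)⁻¹ - (ζ + v)⁻¹) ^ 2 := by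
  have h1 : ζ - u ≠ 0 := sub_ne_zero.mpr hu
  have h2 : ζ + u ≠ 0 := by rwa [← sub_neg_eq_add, sub_ne_zero]
  have h3 : ζ - v ≠ 0 := sub_ne_zero.mpr hv
  have h4 : ζ + v ≠ 0 := by rwa [← sub_neg_eq_add, sub_ne_zero]
  field_simp
  linear_combination 4 * (ζ ^ 2 - u ^ 2) * (ζ ^ 2 - v ^ 2) * huv

theorem conformality_identity_of_sq_eq_neg_one {K : Type*} [Field K] {i : K} (hi : i ^ 2 = -1)
    {ζ w : K} (h1 : ζ ≠ w) (h2 : ζ ≠ i * w) (h3 : ζ ≠ -w) (h4 : ζ ≠ -(i * w)) :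
    ((1 - i) * (ζ - w)⁻¹ + (1 + i) * (ζ - i * w)⁻¹
        + (-1 + i) * (ζ - -w)⁻¹ + (-1 - i) * (ζ - -(i * w))⁻¹)
      * ((1 + i) * (ζ - w)⁻¹ + (1 - i) * (ζ - i * w)⁻¹
        + (-1 - i) * (ζ - -w)⁻¹ + (-1 + i) * (ζ - -(i * w))⁻¹)
    = 2 * ((ζ - w)⁻¹ - (ζ - i * w)⁻¹ + (ζ - -w)⁻¹ - (ζ - -(i * w))⁻¹) ^ 2 := by
  have hw : w ^ 2 + (i * w) ^ 2 = 0 := by linear_combination w ^ 2 * hi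
  simp only [sub_neg_eq_add]
  calc _ = ((1 - i) * ((ζ - w)⁻¹ - (ζ + w)⁻¹) + (1 + i) * ((ζ - i * w)⁻¹ - (ζ + i * w)⁻¹))
          * ((1 + i) * ((ζ - w)⁻¹ - (ζ + w)⁻¹) + (1 - i) * ((ζ - i * w)⁻¹ - (ζ + i * w)⁻¹)) := by
        ring
    _ = _ := by
        rw [mul_conj_factor_eq_two_mul_sq_add_sq hi,
          sq_inv_sub_inv_add_sq_inv_sub_inv hw h1 h3 h2 h4]
        ring

theorem exp_add_pi_div_two_mul_I (θ : ℝ) : exp ((θ + π / 2 : ℝ) * I) = I * exp (θ * I) := by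
  rw [ofReal_add, add_mul, Complex.exp_add, mul_comm, ofReal_div, ofReal_ofNat,
    exp_pi_div_two_mul_I]

/-- The algebraic identity expressing the conformality relation
`∂_ζ z · ∂_ζ z̄ = (∂_ζ ϑ)²` for the Lorentz-minimal surface of the Aztec diamond,
where the four points `e^{iπ/4}, e^{3iπ/4}, e^{5iπ/4}, e^{7iπ/4}` are the fourth
roots of `−1`. -/
theorem aztec_conformality_identity (ζ : ℂ)
    (h1 : ζ ≠ Complex.exp ((Real.pi / 4 : ℝ) * I))
    (h2 : ζ ≠ Complex.exp ((3 * Real.pi / 4 : ℝ) * I))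
    (h3 : ζ ≠ Complex.exp ((5 * Real.pi / 4 : ℝ) * I))
    (h4 : ζ ≠ Complex.exp ((7 * Real.pi / 4 : ℝ) * I)) :
    ((1 - I) * (ζ - Complex.exp ((Real.pi / 4 : ℝ) * I))⁻¹
        + (1 + I) * (ζ - Complex.exp ((3 * Real.pi / 4 : ℝ) * I))⁻¹
        + (-1 + I) * (ζ - Complex.exp ((5 * Real.pi / 4 : ℝ) * I))⁻¹
        + (-1 - I) * (ζ - Complex.exp ((7 * Real.pi / 4 : ℝ) * I))⁻¹)
      * ((1 + I) * (ζ - Complex.exp ((Real.pi / 4 : ℝ) * I))⁻¹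
        + (1 - I) * (ζ - Complex.exp ((3 * Real.pi / 4 : ℝ) * I))⁻¹
        + (-1 - I) * (ζ - Complex.exp ((5 * Real.pi / 4 : ℝ) * I))⁻¹
        + (-1 + I) * (ζ - Complex.exp ((7 * Real.pi / 4 : ℝ) * I))⁻¹)
    = 2 * ((ζ - Complex.exp ((Real.pi / 4 : ℝ) * I))⁻¹
        - (ζ - Complex.exp ((3 * Real.pi / 4 : ℝ) * I))⁻¹
        + (ζ - Complex.exp ((5 * Real.pi / 4 : ℝ) * I))⁻¹
        - (ζ - Complex.exp ((7 * Real.pi / 4 : ℝ) * I))⁻¹) ^ 2 := by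
  set ω := exp ((π / 4 : ℝ) * I)
  have hω3 : exp ((3 * π / 4 : ℝ) * I) = I * ω := by
    rw [show 3 * π / 4 = π / 4 + π / 2 by ring, exp_add_pi_div_two_mul_I]
  have hω5 : exp ((5 * π / 4 : ℝ) * I) = -ω := by
    rw [show 5 * π / 4 = 3 * π / 4 + π / 2 by ring, exp_add_pi_div_two_mul_I, hω3,
      ← mul_assoc, I_mul_I, neg_one_mul]
  have hω7 : exp ((7 * π / 4 : ℝ) * I) = -(I * ω) := by
    rw [show 7 * π / 4 = 5 * π / 4 + π / 2 by ring, exp_add_pi_div_two_mul_I, hω5, mul_neg]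
  rw [hω3] at h2; rw [hω5] at h3; rw [hω7] at h4; rw [hω3, hω5, hω7]
  exact conformality_identity_of_sq_eq_neg_one I_sq h1 h2 h3 h4
end
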